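/- Let (Ω, ℙ) be a probability space, (X_n)_{n≥1} real random variables, and Y a real random variable with ℙ(Y = 0) < 1 such that Y is independent of X_n for every n. Let (S_n)_{n≥1} be real random variables such that S_n has the same distribution as X_n · Y for every n. Let (a_n) be positive numbers with d_n := E|Y|^{a_n} < ∞ for every n, let (b_n) be positive numbers with b_n → ∞, and suppose limsup_{n→∞} b_n^{−1} E(|S_n|^{a_n}) = c for some c ∈ (0, ∞). Then for every sequence (c_n) of positive numbers with ∑_{n=1}^∞ c_n^{−1} < ∞, one has ℙ( ⋃_{n=1}^∞ ⋂_{k=n}^∞ { |X_k| ≤ (c_k b_k / d_k)^{1/a_k} } ) = 1. -/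

import Mathlib

/-!
Markov's inequality bounds `ℙ(|X_k| > (t / d_k)^(1/a_k))` by `d_k E|X_k|^{a_k} / t`, and by
independence `d_k E|X_k|^{a_k} = E|X_k Y|^{a_k} = E|S_k|^{a_k}`. The limsup hypothesis makes this
at most `(|c| + 1) b_k` for large `k`, so with `t = c_k b_k` the probabilities of the exceptional
events are eventually at most `(|c| + 1) / c_k`, a summable sequence, and Borel–Cantelli applies.
-/

open MeasureTheory Set Filter ENNReal

theorem ENNReal.eventually_le_ofReal_mul_of_limsup_lt {ι : Type*} {l : Filter ι} {b : ι → ℝ}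
    (hb : ∀ i, 0 < b i) {f : ι → ℝ≥0∞} {C : ℝ}
    (h : limsup (fun i ↦ ENNReal.ofReal (b i)⁻¹ * f i) l < ENNReal.ofReal C) :
    ∀ᶠ i in l, f i ≤ ENNReal.ofReal (C * b i) := by
  filter_upwards [eventually_lt_of_limsup_lt h] with i hi
  rw [ENNReal.ofReal_inv_of_pos (hb i), ← ENNReal.div_eq_inv_mul,
    ENNReal.div_lt_iff (.inl (by simpa using hb i)) (.inl ofReal_ne_top)] at hi
  rw [ENNReal.ofReal_mul' (hb i).le]
  exact hi.le

theorem ENNReal.tsum_ne_top_of_eventually_le_ofReal {f : ℕ → ℝ≥0∞} {g : ℕ → ℝ}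
    (hf : ∀ k, f k ≠ ∞) (hg : Summable g)
    (hfg : ∀ᶠ k in atTop, f k ≤ ENNReal.ofReal (g k)) :
    ∑' k, f k ≠ ∞ := by
  have hsum : Summable fun k ↦ (f k).toReal := by
    refine hg.norm.of_norm_bounded_eventually_nat ?_
    filter_upwards [hfg] with k hk
    rw [Real.norm_of_nonneg ENNReal.toReal_nonneg]
    exact toReal_le_of_le_ofReal (norm_nonneg _)
      (hk.trans (ofReal_le_ofReal (Real.le_norm_self _)))
  rw [tsum_congr fun k ↦ (ofReal_toReal (hf k)).symm,
    ← ENNReal.ofReal_tsum_of_nonneg (fun _ ↦ ENNReal.toReal_nonneg) hsum]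
  exact ofReal_ne_top

section

variable {Ω : Type*} [MeasurableSpace Ω] {μ : Measure Ω}

theorem lintegral_ofReal_abs_rpow_ne_zero {Y : Ω → ℝ} (hY : AEMeasurable Y μ) (p : ℝ)
    (hY0 : ¬ Y =ᵐ[μ] 0) : ∫⁻ ω, ENNReal.ofReal (|Y ω| ^ p) ∂μ ≠ 0 := by
  rw [Ne, lintegral_eq_zero_iff' (hY.abs.pow_const p).ennreal_ofReal]
  refine fun h ↦ hY0 ?_
  filter_upwards [h] with ω hω
  by_contra hne
  exact (Real.rpow_pos_of_pos (abs_pos.mpr hne) p).not_ge (ENNReal.ofReal_eq_zero.mp hω)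

theorem mul_measure_rpow_lt_abs_le_lintegral {X : Ω → ℝ} (hX : AEMeasurable X μ) {p t : ℝ}
    (hp : 0 < p) (ht : 0 ≤ t) :
    ENNReal.ofReal t * μ {ω | t ^ (1 / p) < |X ω|}
      ≤ ∫⁻ ω, ENNReal.ofReal (|X ω| ^ p) ∂μ := by
  calc ENNReal.ofReal t * μ {ω | t ^ (1 / p) < |X ω|}
      ≤ ENNReal.ofReal t * μ {ω | ENNReal.ofReal t ≤ ENNReal.ofReal (|X ω| ^ p)} := by
        refine mul_le_mul_right (measure_mono fun ω hω ↦ ?_) _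
        rw [mem_ofPred_eq, one_div, Real.rpow_inv_lt_iff_of_pos ht (abs_nonneg _) hp] at hω
        exact ENNReal.ofReal_le_ofReal hω.le
    _ ≤ _ := mul_meas_ge_le_lintegral₀ (hX.abs.pow_const p).ennreal_ofReal _

theorem measure_iUnion_iInter_eq_one_of_summable [IsProbabilityMeasure μ] {s : ℕ → Set Ω}
    {g : ℕ → ℝ} (hg : Summable g)
    (hs : ∀ᶠ k in atTop, μ (s k)ᶜ ≤ ENNReal.ofReal (g k)) :
    μ (⋃ n, ⋂ k, ⋂ _ : n ≤ k, s k) = 1 := by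
  have h := ae_eventually_notMem
    (ENNReal.tsum_ne_top_of_eventually_le_ofReal (fun k ↦ measure_ne_top μ _) hg hs)
  rw [← measure_univ (μ := μ)]
  refine measure_congr (ae_eq_univ.mpr ?_)
  refine measure_mono_null (fun ω hω ↦ ?_) (ae_iff.mp h)
  refine fun hev ↦ hω ?_
  obtain ⟨n, hn⟩ := eventually_atTop.mp hev
  exact mem_iUnion.mpr ⟨n, mem_iInter₂.mpr fun k hk ↦ notMem_compl_iff.mp (hn k hk)⟩

end

namespace ProbabilityTheory

variable {Ω : Type*} [MeasurableSpace Ω] {μ : Measure Ω}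

theorem lintegral_ofReal_abs_mul_rpow_of_indepFun {X Y : Ω → ℝ} (hX : AEMeasurable X μ)
    (hY : AEMeasurable Y μ) (hXY : IndepFun X Y μ) (p : ℝ) :
    ∫⁻ ω, ENNReal.ofReal (|X ω * Y ω| ^ p) ∂μ
      = (∫⁻ ω, ENNReal.ofReal (|X ω| ^ p) ∂μ) *
          ∫⁻ ω, ENNReal.ofReal (|Y ω| ^ p) ∂μ := by
  have hg : Measurable fun x : ℝ ↦ ENNReal.ofReal (|x| ^ p) :=
    (measurable_abs.pow_const p).ennreal_ofReal
  simp_rw [abs_mul, Real.mul_rpow (abs_nonneg _) (abs_nonneg _),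
    ENNReal.ofReal_mul (Real.rpow_nonneg (abs_nonneg _) _)]
  exact lintegral_mul_eq_lintegral_mul_lintegral_of_indepFun'' (hg.comp_aemeasurable hX)
    (hg.comp_aemeasurable hY) (hXY.comp hg hg)

theorem measure_div_lintegral_rpow_lt_abs_le_of_indepFun {X Y : Ω → ℝ} (hX : AEMeasurable X μ)
    (hY : AEMeasurable Y μ) (hXY : IndepFun X Y μ) (hY0 : ¬ Y =ᵐ[μ] 0) {p t : ℝ}
    (hp : 0 < p) (ht : 0 < t) (hYp : ∫⁻ ω, ENNReal.ofReal (|Y ω| ^ p) ∂μ ≠ ∞) :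
    μ {ω | (t / (∫⁻ ω, ENNReal.ofReal (|Y ω| ^ p) ∂μ).toReal) ^ (1 / p) < |X ω|}
      ≤ (∫⁻ ω, ENNReal.ofReal (|X ω * Y ω| ^ p) ∂μ) / ENNReal.ofReal t := by
  set d := ∫⁻ ω, ENNReal.ofReal (|Y ω| ^ p) ∂μ
  have hd0 : d ≠ 0 := lintegral_ofReal_abs_rpow_ne_zero hY p hY0
  have hd : 0 < d.toReal := ENNReal.toReal_pos hd0 hYp
  have hcancel : ENNReal.ofReal (t / d.toReal) * d = ENNReal.ofReal t := by
    rw [ENNReal.ofReal_div_of_pos hd, ENNReal.ofReal_toReal hYp, ENNReal.div_mul_cancel hd0 hYp]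
  rw [ENNReal.le_div_iff_mul_le (.inl (by simpa using ht)) (.inl ofReal_ne_top),
    lintegral_ofReal_abs_mul_rpow_of_indepFun hX hY hXY]
  calc _ = ENNReal.ofReal (t / d.toReal) * μ {ω | (t / d.toReal) ^ (1 / p) < |X ω|} * d := by
        rw [mul_right_comm, hcancel, mul_comm]
    _ ≤ _ := by
        gcongr
        exact mul_measure_rpow_lt_abs_le_lintegral hX hp (div_pos ht hd).le

end ProbabilityTheory

theorem fluctuations_weak_generalized
    {Ω : Type*} [MeasurableSpace Ω] (ℙ : Measure Ω) [IsProbabilityMeasure ℙ]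
    (X S : ℕ → Ω → ℝ) (Y : Ω → ℝ)
    (hXm : ∀ n, Measurable (X n)) (hSm : ∀ n, Measurable (S n)) (hYm : Measurable Y)
    (hY0 : ℙ {ω | Y ω = 0} < 1)
    (hindep : ∀ n, ProbabilityTheory.IndepFun Y (X n) ℙ)
    (hS : ∀ n, Measure.map (S n) ℙ = Measure.map (fun ω => X n ω * Y ω) ℙ)
    (a b : ℕ → ℝ) (ha : ∀ n, 0 < a n) (hb : ∀ n, 0 < b n)
    (d : ℕ → ℝ≥0∞)
    (hd : ∀ n, d n = ∫⁻ ω, ENNReal.ofReal (|Y ω| ^ a n) ∂ℙ)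
    (hdfin : ∀ n, d n ≠ ⊤)
    (c : ℝ)
    (hlimsup : Filter.limsup
        (fun n => ENNReal.ofReal (b n)⁻¹ * ∫⁻ ω, ENNReal.ofReal (|S n ω| ^ a n) ∂ℙ)
        atTop = ENNReal.ofReal c)
    (cs : ℕ → ℝ) (hcs : ∀ n, 0 < cs n) (hcs_sum : Summable (fun n => (cs n)⁻¹)) :
    ℙ (⋃ n : ℕ, ⋂ k : ℕ, ⋂ _ : n ≤ k,
        {ω | |X k ω| ≤ (cs k * b k / (d k).toReal) ^ (1 / a k)}) = 1 := by
  have hY_ae : ¬ Y =ᵐ[ℙ] 0 := fun h ↦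
    hY0.ne ((measure_congr (ae_eq_univ.mpr (ae_iff.mp h))).trans measure_univ)
  have hmoment : ∀ k, ∫⁻ ω, ENNReal.ofReal (|S k ω| ^ a k) ∂ℙ
      = ∫⁻ ω, ENNReal.ofReal (|X k ω * Y ω| ^ a k) ∂ℙ := fun k ↦
    ((ProbabilityTheory.IdentDistrib.mk (hSm k).aemeasurable ((hXm k).mul hYm).aemeasurable
      (hS k)).comp (measurable_abs.pow_const (a k)).ennreal_ofReal).lintegral_eq
  have hc : ENNReal.ofReal c < ENNReal.ofReal (|c| + 1) :=
    ENNReal.ofReal_lt_ofReal_iff'.mpr ⟨by linarith [le_abs_self c], by positivity⟩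
  refine measure_iUnion_iInter_eq_one_of_summable (hcs_sum.mul_left (|c| + 1)) ?_
  filter_upwards [ENNReal.eventually_le_ofReal_mul_of_limsup_lt hb (hlimsup ▸ hc)] with k hk
  calc ℙ {ω | |X k ω| ≤ (cs k * b k / (d k).toReal) ^ (1 / a k)}ᶜ
      = ℙ {ω | (cs k * b k / (d k).toReal) ^ (1 / a k) < |X k ω|} := by
        simp only [compl_ofPred, not_le]
    _ ≤ (∫⁻ ω, ENNReal.ofReal (|X k ω * Y ω| ^ a k) ∂ℙ) /
          ENNReal.ofReal (cs k * b k) := by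
        rw [hd k]
        exact ProbabilityTheory.measure_div_lintegral_rpow_lt_abs_le_of_indepFun
          (hXm k).aemeasurable hYm.aemeasurable (hindep k).symm hY_ae (ha k)
          (mul_pos (hcs k) (hb k)) (hd k ▸ hdfin k)
    _ ≤ ENNReal.ofReal ((|c| + 1) * b k) / ENNReal.ofReal (cs k * b k) := by
        rw [← hmoment]
        gcongr
    _ = ENNReal.ofReal ((|c| + 1) * (cs k)⁻¹) := by
        rw [← ENNReal.ofReal_div_of_pos (mul_pos (hcs k) (hb k))]
        congr 1
        field_simp [(hb k).ne']
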